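/- Let T be a totally ordered set, k a field, and M a subrepresentation of a finite direct sum of representable representations ⊕_{i=1}^n k_{[a_i,∞)} that is generated by finitely many elements. Then M is isomorphic to a finite direct sum of representations of the form k_{[c,∞)}; in particular M is projective. -/

import Mathlib

open scoped Classical DirectSum

universe u v

/-- A persistence module (representation) of a preordered set `T`
over a field `k`: a functor from `T` to `k`-vector spaces. -/
structure PersMod (T : Type u) [Preorder T] (k : Type v) [Field k] where
  V : T → Type v
  [addCommGroup : ∀ t, AddCommGroup (V t)]
  [module : ∀ t, Module k (V t)]
  map : ∀ {s t : T}, s ≤ t → (V s →ₗ[k] V t)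
  map_id : ∀ t : T, map (le_refl t) = LinearMap.id
  map_comp : ∀ {s t u : T} (h₁ : s ≤ t) (h₂ : t ≤ u),
    map (h₁.trans h₂) = (map h₂).comp (map h₁)

attribute [instance] PersMod.addCommGroup PersMod.module

/-- A subset of a preordered set is convex (an interval, in a total order). -/
def IsConvex {T : Type u} [Preorder T] (J : Set T) : Prop :=
  ∀ ⦃a b c : T⦄, a ≤ b → b ≤ c → a ∈ J → c ∈ J → b ∈ J

/-- The interval representation `k_J`: `k` at points of `J`, `0` elsewhere,
identity structure maps within `J`. -/
noncomputable def intervalRep (T : Type u) [Preorder T] (k : Type v) [Field k]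
    (J : Set T) (hJ : IsConvex J) : PersMod T k where
  V t := ↥(if t ∈ J then (⊤ : Submodule k k) else ⊥)
  map {s t} h :=
    { toFun := fun x => ⟨if t ∈ J then (x : k) else 0, by
        by_cases ht : t ∈ J
        · rw [if_pos ht, if_pos ht]; exact Submodule.mem_top
        · rw [if_neg ht, if_neg ht]; exact Submodule.zero_mem _⟩
      map_add' := fun x y => by
        by_cases ht : t ∈ J <;> ext <;> simp [ht]
      map_smul' := fun c x => by
        by_cases ht : t ∈ J <;> ext <;> simp [ht] }
  map_id t := by
    ext x
    by_cases ht : t ∈ J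
    · simp [ht]
    · have hx : (x : k) = 0 := by
        have h2 := x.2; simp only [if_neg ht] at h2; exact (Submodule.mem_bot k).mp h2
      first
        | (show (if t ∈ J then (x : k) else 0) = (x : k); rw [if_neg ht, hx])
        | (apply Subtype.ext; show (if t ∈ J then (x : k) else 0) = (x : k); rw [if_neg ht, hx])
  map_comp {s t u} h₁ h₂ := by
    ext x
    by_cases hu : u ∈ J
    · by_cases ht : t ∈ J
      · first
          | (show (if u ∈ J then (x : k) else 0) = (if u ∈ J then (if t ∈ J then (x : k) else 0) else 0)
             simp only [hu, ht, ↓reduceIte])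
          | (apply Subtype.ext
             show (if u ∈ J then (x : k) else 0) = (if u ∈ J then (if t ∈ J then (x : k) else 0) else 0)
             simp only [hu, ht, ↓reduceIte])
      · by_cases hs : s ∈ J
        · exact absurd (hJ h₁ h₂ hs hu) ht
        · have hx : (x : k) = 0 := by
            have h2 := x.2; simp only [if_neg hs] at h2; exact (Submodule.mem_bot k).mp h2
          simp [hu, ht, hx]
    · simp [hu]

/-- The space of morphisms of representations `M → N`, as a submodule of
the module of all families of linear maps. -/
def homSubmodule {T : Type u} [Preorder T] (k : Type v) [Field k]
    (M N : PersMod T k) : Submodule k (∀ t, M.V t →ₗ[k] N.V t) where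
  carrier := {f | ∀ (s t : T) (h : s ≤ t) (x : M.V s),
    N.map h (f s x) = f t (M.map h x)}
  add_mem' := by
    intro a b ha hb s t h x
    simp [ha s t h x, hb s t h x]
  zero_mem' := by intro s t h x; simp
  smul_mem' := by
    intro c a ha s t h x
    simp [ha s t h x]

/-- An isomorphism of persistence modules. -/
structure PersIso {T : Type u} [Preorder T] {k : Type v} [Field k]
    (M N : PersMod T k) where
  e : ∀ t, M.V t ≃ₗ[k] N.V t
  natural : ∀ {s t : T} (h : s ≤ t) (x : M.V s),
    e t (M.map h x) = N.map h (e s x)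

/-- The pointwise product of a family of persistence modules. -/
def prodRep {T : Type u} [Preorder T] (k : Type v) [Field k]
    (ι : Type v) (F : ι → PersMod T k) : PersMod T k where
  V t := ∀ i, (F i).V t
  map {s t} h := LinearMap.pi fun i => ((F i).map h).comp (LinearMap.proj i)
  map_id t := by
    ext x i
    simp [(F i).map_id]
  map_comp h₁ h₂ := by
    ext x i
    simp [(F i).map_comp h₁ h₂]

/-- The direct sum of a family of persistence modules. -/
noncomputable def dSum {T : Type u} [Preorder T] (k : Type v) [Field k]
    (ι : Type v) (F : ι → PersMod T k) : PersMod T k where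
  V t := ⨁ i, (F i).V t
  map {s t} h :=
    letI := Classical.decEq ι
    DirectSum.toModule k ι _ fun i =>
      (DirectSum.lof k ι (fun j => (F j).V t) i).comp ((F i).map h)
  map_id t := by
    letI := Classical.decEq ι
    refine DirectSum.linearMap_ext _ fun i => ?_
    ext x
    simp [DirectSum.toModule_lof, (F i).map_id]
  map_comp {s t u} h₁ h₂ := by
    letI := Classical.decEq ι
    refine DirectSum.linearMap_ext _ fun i => ?_
    ext x
    simp [DirectSum.toModule_lof, (F i).map_comp h₁ h₂]

theorem isConvex_Ici {T : Type u} [LinearOrder T] (a : T) : IsConvex (Set.Ici a) :=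
  fun _ _ _ h1 _ ha _ => le_trans ha h1

/-! Composing the embedding `M ↪ ⊕ k_{[aᵢ,∞)}` with the coordinates `⊕ k_{[aᵢ,∞)} → kⁿ`
identifies `M` with an increasing family of subspaces `W_t ⊆ kⁿ`, and the images
`u_j ∈ M_{b_j}` of the generators give vectors `v_j ∈ kⁿ` with `W_t = span {v_j | b_j ≤ t}`.
Running through the `v_j` in increasing order of `b_j` and keeping those outside the span of
the earlier ones yields a linearly independent subfamily that spans every `W_t` in the same
way, and the corresponding `u_j` define an isomorphism `⊕ k_{[b_j,∞)} ≅ M`. -/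

section Selection

variable {k : Type*} [Field k] {W : Type*} [AddCommGroup W] [Module k W]
  {ι : Type*} {T : Type*} [LinearOrder T]

open Submodule in
theorem exists_linearIndepOn_span_eq (v : ι → W) (b : ι → T) (s : Finset ι) :
    ∃ S ⊆ s, LinearIndepOn k v (S : Set ι) ∧ ∀ t,
      span k (v '' {j | j ∈ s ∧ b j ≤ t}) = span k (v '' {j | j ∈ S ∧ b j ≤ t}) := by
  classical
  induction s using Finset.induction_on_max_value b with
  | empty => exact ⟨∅, subset_rfl, by simp, fun t => by simp⟩
  | insert a s has hmax ih =>
    obtain ⟨S, hSs, hS, hspan⟩ := ih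
    have image_setOf_insert (U : Finset ι) (t : T) (ht : b a ≤ t) :
        v '' {j | j ∈ insert a U ∧ b j ≤ t} =
          insert (v a) (v '' {j | j ∈ U ∧ b j ≤ t}) := by
      rw [← Set.image_insert_eq]
      congr 1
      ext j
      simp only [Finset.mem_insert, Set.mem_ofPred_eq, Set.mem_insert_iff]
      grind
    have setOf_insert_of_not_le (U : Finset ι) (t : T) (ht : ¬ b a ≤ t) :
        {j | j ∈ insert a U ∧ b j ≤ t} = {j | j ∈ U ∧ b j ≤ t} := by
      ext j
      simp only [Finset.mem_insert, Set.mem_ofPred_eq]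
      grind
    by_cases hva : v a ∈ span k (v '' s)
    · refine ⟨S, hSs.trans (Finset.subset_insert a s), hS, fun t => ?_⟩
      by_cases hat : b a ≤ t
      · have hs_le : {j | j ∈ s ∧ b j ≤ t} = s := by
          ext j
          exact ⟨fun hj => hj.1, fun hj => ⟨hj, (hmax j hj).trans hat⟩⟩
        rw [image_setOf_insert s t hat, span_insert_eq_span, ← hspan t, hs_le]
        rwa [hs_le]
      · rw [setOf_insert_of_not_le s t hat, hspan t]
    · refine ⟨insert a S, Finset.insert_subset_insert a hSs, ?_, fun t => ?_⟩
      · rw [Finset.coe_insert, linearIndepOn_insert (fun h => has (hSs h))]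
        exact ⟨hS, fun h => hva (span_mono (Set.image_mono hSs) h)⟩
      · by_cases hat : b a ≤ t
        · rw [image_setOf_insert s t hat, image_setOf_insert S t hat, span_insert, span_insert,
            hspan t]
        · rw [setOf_insert_of_not_le s t hat, setOf_insert_of_not_le S t hat, hspan t]

theorem exists_fin_linearIndependent_span_eq [Fintype ι] (v : ι → W) (b : ι → T) :
    ∃ (m : ℕ) (e : Fin m → ι), LinearIndependent k (v ∘ e) ∧ ∀ t,
      Submodule.span k (v '' {j | b j ≤ t}) =
        Submodule.span k ((v ∘ e) '' {i | b (e i) ≤ t}) := by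
  obtain ⟨S, -, hS, hspan⟩ := exists_linearIndepOn_span_eq (k := k) v b Finset.univ
  let e : Fin S.card → ι := fun i => S.equivFin.symm i
  refine ⟨S.card, e, hS.comp _ S.equivFin.symm.injective, fun t => ?_⟩
  have hrange : e '' {i | b (e i) ≤ t} = {j | j ∈ S ∧ b j ≤ t} := by
    ext j
    constructor
    · rintro ⟨i, hi, rfl⟩
      exact ⟨(S.equivFin.symm i).2, hi⟩
    · rintro ⟨hj, hjt⟩
      exact ⟨S.equivFin ⟨j, hj⟩, by simpa [e] using hjt, by simp [e]⟩
  rw [Set.image_comp, hrange, ← hspan t]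
  simp

end Selection

section Representables

variable {T : Type u} [LinearOrder T] {k : Type} [Field k]

namespace intervalRep

variable {J : Set T} {hJ : IsConvex J} {t : T}

theorem val_eq_zero (ht : t ∉ J) (x : (intervalRep T k J hJ).V t) : x.1 = 0 := by
  have hx := x.2
  simp only [if_neg ht] at hx
  exact (Submodule.mem_bot k).mp hx

def one (ht : t ∈ J) : (intervalRep T k J hJ).V t :=
  ⟨1, by simp [ht]⟩

theorem map_val {s : T} (h : s ≤ t) (x : (intervalRep T k J hJ).V s) :
    ((intervalRep T k J hJ).map h x).1 = if t ∈ J then x.1 else 0 :=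
  rfl

end intervalRep

theorem intervalRep_Ici_val_eq_zero {a t : T} (h : ¬ a ≤ t)
    (x : (intervalRep T k (Set.Ici a) (isConvex_Ici a)).V t) : x.1 = 0 :=
  intervalRep.val_eq_zero h x

theorem intervalRep_Ici_map_val {a s t : T} (h : s ≤ t)
    (x : (intervalRep T k (Set.Ici a) (isConvex_Ici a)).V s) :
    ((intervalRep T k (Set.Ici a) (isConvex_Ici a)).map h x).1 = x.1 := by
  rw [intervalRep.map_val]
  by_cases ht : t ∈ Set.Ici a
  · rw [if_pos ht]
  · rw [if_neg ht, intervalRep_Ici_val_eq_zero (fun hs => ht (hs.trans h)) x]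

variable {ι : Type}

noncomputable abbrev sumIci (k : Type) [Field k] (b : ι → T) : PersMod T k :=
  dSum k ι fun i => intervalRep T k (Set.Ici (b i)) (isConvex_Ici _)

namespace sumIci

variable (b : ι → T)

noncomputable def single (t : T) (i : ι) :
    (intervalRep T k (Set.Ici (b i)) (isConvex_Ici _)).V t →ₗ[k] (sumIci k b).V t :=
  DirectSum.lof k ι (fun i => (intervalRep T k (Set.Ici (b i)) (isConvex_Ici _)).V t) i

variable {b}

theorem hom_ext {N : Type*} [AddCommGroup N] [Module k N] {t : T}
    {f g : (sumIci k b).V t →ₗ[k] N} (h : ∀ i x, f (single b t i x) = g (single b t i x)) :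
    f = g :=
  DirectSum.linearMap_ext _ fun i => LinearMap.ext (h i)

theorem map_single {s t : T} (h : s ≤ t) (i : ι) (x) :
    (sumIci k b).map h (single b s i x) =
      single b t i ((intervalRep T k (Set.Ici (b i)) (isConvex_Ici _)).map h x) := by
  unfold sumIci dSum; erw [DirectSum.toModule_lof]; rfl

variable (b)

noncomputable def coord (t : T) : (sumIci k b).V t →ₗ[k] (ι → k) :=
  LinearMap.pi fun i => (Submodule.subtype _) ∘ₗ DirectSum.component k ι _ i

variable {b}

theorem coord_single (t : T) (i : ι) (x) :
    coord b t (single (k := k) b t i x) = Pi.single i x.1 := by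
  ext j
  show (DirectSum.component k ι (fun i => (intervalRep T k (Set.Ici (b i)) (isConvex_Ici _)).V t) j
    (DirectSum.lof k ι _ i x)).1 = _
  by_cases hij : i = j
  · subst hij; simp
  · rw [DirectSum.component.of, dif_neg hij, Pi.single_eq_of_ne (Ne.symm hij)]
    rfl

theorem coord_injective (t : T) : Function.Injective (coord (k := k) b t) :=
  fun _ _ hxy => DirectSum.ext_component k fun i => Subtype.ext (congrFun hxy i)

theorem coord_apply_eq_zero {t : T} {i : ι} (h : ¬ b i ≤ t) (z : (sumIci k b).V t) :
    coord b t z i = 0 :=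
  intervalRep_Ici_val_eq_zero h _

theorem coord_map {s t : T} (h : s ≤ t) (z : (sumIci k b).V s) :
    coord b t ((sumIci k b).map h z) = coord b s z := by
  suffices (coord b t) ∘ₗ (sumIci k b).map h = coord b s from LinearMap.congr_fun this z
  refine hom_ext fun i x => ?_
  rw [LinearMap.comp_apply, map_single, coord_single, coord_single, intervalRep_Ici_map_val]

variable (b) (M : PersMod T k)

noncomputable def lift (u : ∀ i, M.V (b i)) (t : T) : (sumIci k b).V t →ₗ[k] M.V t :=
  DirectSum.toModule k ι (M.V t) fun i =>
    if h : b i ≤ t then LinearMap.toSpanSingleton k _ (M.map h (u i)) ∘ₗ Submodule.subtype _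
    else 0

variable {b M}

theorem lift_single (u : ∀ i, M.V (b i)) (t : T) (i : ι) (x) :
    lift b M u t (single b t i x) = if h : b i ≤ t then x.1 • M.map h (u i) else 0 := by
  unfold lift single
  erw [DirectSum.toModule_lof]
  split_ifs <;> rfl

theorem lift_mem_homSubmodule (u : ∀ i, M.V (b i)) :
    lift b M u ∈ homSubmodule k (sumIci k b) M := by
  intro s t h z
  suffices (M.map h) ∘ₗ lift b M u s = lift b M u t ∘ₗ (sumIci k b).map h from
    LinearMap.congr_fun this z
  refine hom_ext fun i x => ?_
  rw [LinearMap.comp_apply, LinearMap.comp_apply, map_single, lift_single, lift_single,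
    intervalRep_Ici_map_val]
  by_cases hs : b i ≤ s
  · rw [dif_pos hs, dif_pos (hs.trans h), map_smul, ← LinearMap.comp_apply, ← M.map_comp]
  · rw [dif_neg hs, map_zero, intervalRep_Ici_val_eq_zero hs x]
    split_ifs <;> simp

theorem eq_lift_of_mem_homSubmodule {g : ∀ t, (sumIci k b).V t →ₗ[k] M.V t}
    (hg : g ∈ homSubmodule k (sumIci k b) M) :
    g = lift b M (fun i => g (b i) (single b (b i) i (intervalRep.one le_rfl))) := by
  funext t
  refine hom_ext fun i x => ?_
  rw [lift_single]
  by_cases h : b i ≤ t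
  · rw [dif_pos h]
    have hx : single b t i x =
        x.1 • (sumIci k b).map h (single b (b i) i (intervalRep.one le_rfl)) := by
      rw [map_single, ← map_smul]
      congr 1
      refine Subtype.ext ?_
      show x.1 = x.1 * ((intervalRep T k (Set.Ici (b i)) (isConvex_Ici _)).map h
        (intervalRep.one le_rfl)).1
      rw [intervalRep_Ici_map_val]
      exact (mul_one _).symm
    rw [hx, map_smul, ← hg]
  · rw [dif_neg h, show x = 0 from Subtype.ext (intervalRep_Ici_val_eq_zero h x), map_zero,
      map_zero]

variable [Fintype ι] {W : Type*} [AddCommGroup W] [Module k W]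

theorem range_linearCombination_comp_coord (v : ι → W) (t : T) :
    LinearMap.range (Fintype.linearCombination k v ∘ₗ coord b t) =
      Submodule.span k (v '' {i | b i ≤ t}) := by
  refine le_antisymm ?_ (Submodule.span_le.2 ?_)
  · rintro _ ⟨z, rfl⟩
    rw [LinearMap.comp_apply, Fintype.linearCombination_apply]
    refine Submodule.sum_mem _ fun i _ => ?_
    by_cases hi : b i ≤ t
    · exact Submodule.smul_mem _ _ (Submodule.subset_span ⟨i, hi, rfl⟩)
    · rw [coord_apply_eq_zero hi, zero_smul]
      exact Submodule.zero_mem _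
  · rintro _ ⟨i, hi, rfl⟩
    refine ⟨single b t i (intervalRep.one hi), ?_⟩
    rw [LinearMap.comp_apply, coord_single, Fintype.linearCombination_apply_single]
    exact one_smul k (v i)

theorem comp_lift_eq {φ : ∀ t, M.V t →ₗ[k] W}
    (hφ : ∀ s t (h : s ≤ t) x, φ t (M.map h x) = φ s x) (u : ∀ i, M.V (b i)) (t : T) :
    φ t ∘ₗ lift b M u t =
      Fintype.linearCombination k (fun i => φ (b i) (u i)) ∘ₗ coord b t := by
  refine hom_ext fun i x => ?_
  rw [LinearMap.comp_apply, LinearMap.comp_apply, lift_single, coord_single,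
    Fintype.linearCombination_apply_single]
  by_cases hi : b i ≤ t
  · rw [dif_pos hi, map_smul, hφ]
  · rw [dif_neg hi, map_zero, intervalRep_Ici_val_eq_zero hi x, zero_smul]

theorem lift_bijective {φ : ∀ t, M.V t →ₗ[k] W} (hφ_inj : ∀ t, Function.Injective (φ t))
    (hφ : ∀ s t (h : s ≤ t) x, φ t (M.map h x) = φ s x) {u : ∀ i, M.V (b i)}
    (hli : LinearIndependent k fun i => φ (b i) (u i))
    (hrange : ∀ t, LinearMap.range (φ t) =
      Submodule.span k ((fun i => φ (b i) (u i)) '' {i | b i ≤ t}))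
    (t : T) : Function.Bijective (lift b M u t) := by
  have hcomp := comp_lift_eq hφ u t
  constructor
  · have hinj := hli.fintypeLinearCombination_injective.comp (coord_injective (k := k) (b := b) t)
    rw [← LinearMap.coe_comp, ← hcomp, LinearMap.coe_comp] at hinj
    exact hinj.of_comp
  · intro y
    obtain ⟨z, hz⟩ : φ t y ∈ LinearMap.range (φ t ∘ₗ lift b M u t) := by
      rw [hcomp, range_linearCombination_comp_coord, ← hrange]
      exact ⟨y, rfl⟩
    exact ⟨z, hφ_inj t hz⟩

end sumIci

end Representables

namespace PersIso

variable {T : Type u} [Preorder T] {k : Type v} [Field k] {M N : PersMod T k}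

noncomputable def ofBijective {f : ∀ t, M.V t →ₗ[k] N.V t} (hf : f ∈ homSubmodule k M N)
    (hbij : ∀ t, Function.Bijective (f t)) : PersIso M N where
  e t := LinearEquiv.ofBijective (f t) (hbij t)
  natural h x := (hf _ _ h x).symm

def symm (φ : PersIso M N) : PersIso N M where
  e t := (φ.e t).symm
  natural {s t} h y := by
    apply (φ.e t).injective
    rw [LinearEquiv.apply_symm_apply, φ.natural, LinearEquiv.apply_symm_apply]

end PersIso

/-- A finitely generated subrepresentation of a finite direct sum of representable
representations `⊕ k_{[aᵢ,∞)}` over a totally ordered set is isomorphic to a finite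
direct sum of representations `k_{[c,∞)}` (in particular it is projective). -/
theorem fg_sub_of_proj_is_proj {T : Type u} [LinearOrder T] (k : Type) [Field k]
    (M : PersMod T k) (n : ℕ) (a : Fin n → T)
    -- M is a subrepresentation: it admits a pointwise injective morphism
    -- into the finite direct sum of representables
    (hsub : ∃ f ∈ homSubmodule k M
        (dSum k (Fin n) (fun i => intervalRep T k (Set.Ici (a i)) (isConvex_Ici _))),
        ∀ t : T, Function.Injective (f t))
    -- M is finitely generated: it is a quotient of a finite direct sum
    -- of representables
    (hfg : ∃ (m : ℕ) (b : Fin m → T),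
        ∃ g ∈ homSubmodule k
          (dSum k (Fin m) (fun j => intervalRep T k (Set.Ici (b j)) (isConvex_Ici _))) M,
        ∀ t : T, Function.Surjective (g t)) :
    ∃ (m : ℕ) (c : Fin m → T),
      Nonempty (PersIso M
        (dSum k (Fin m) (fun j => intervalRep T k (Set.Ici (c j)) (isConvex_Ici _)))) := by
  obtain ⟨f, hf, hf_inj⟩ := hsub
  obtain ⟨m, b, g, hg, hg_surj⟩ := hfg
  let φ t := sumIci.coord a t ∘ₗ f t
  have hφ : ∀ s t (h : s ≤ t) x, φ t (M.map h x) = φ s x := fun s t h x => by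
    simp only [φ, LinearMap.comp_apply, ← hf s t h x, sumIci.coord_map]
  have hφ_inj : ∀ t, Function.Injective (φ t) := fun t =>
    (sumIci.coord_injective t).comp (hf_inj t)
  let u j := g (b j) (sumIci.single b (b j) j (intervalRep.one le_rfl))
  let v j := φ (b j) (u j)
  have hrange (t : T) : LinearMap.range (φ t) = Submodule.span k (v '' {j | b j ≤ t}) := by
    rw [← LinearMap.range_comp_of_range_eq_top (φ t) (LinearMap.range_eq_top.2 (hg_surj t)),
      sumIci.eq_lift_of_mem_homSubmodule hg, sumIci.comp_lift_eq hφ,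
      sumIci.range_linearCombination_comp_coord]
  obtain ⟨m', e, hli, hspan⟩ := exists_fin_linearIndependent_span_eq (k := k) v b
  exact ⟨m', b ∘ e, ⟨(PersIso.ofBijective (sumIci.lift_mem_homSubmodule fun i => u (e i))
    (sumIci.lift_bijective hφ_inj hφ hli fun t => (hrange t).trans (hspan t))).symm⟩⟩
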